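/- Let (M, ω, F₁, F₂) be a bi-Lagrangian manifold with Hess connection ∇ (the unique torsion-free connection with ∇ω = 0 preserving both foliations). Then the complete lift ∇^c on TM is torsion-free, satisfies ∇^c ω^c = 0, and preserves both lifted foliations F₁^c and F₂^c; hence ∇^c is the Hess connection of the bi-Lagrangian structure (ω^c, F₁^c, F₂^c) on TM. -/

import Mathlib

open Module

section Lifts

variable {E : Type*} [NormedAddCommGroup E] [NormedSpace ℝ E]

/-- Vertical lift `f^v = f ∘ π` of a function to the tangent bundle `TM = E × E`. -/
def vlift (f : E → ℝ) : E × E → ℝ := fun p => f p.1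

/-- Complete lift `f^c = df` of a function to the tangent bundle. -/
noncomputable def clift (f : E → ℝ) : E × E → ℝ := fun p => fderiv ℝ f p.1 p.2

/-- Vertical lift `X^v` of a vector field to the tangent bundle, characterized by
`X^v(f^c) = (Xf)^v`. -/
def vliftVF (X : E → E) : E × E → E × E := fun p => (0, X p.1)

/-- Complete lift `X^c` of a vector field to the tangent bundle, characterized by
`X^c(f^c) = (Xf)^c`. -/
noncomputable def cliftVF (X : E → E) : E × E → E × E :=
  fun p => (X p.1, fderiv ℝ X p.1 p.2)

/-- Vertical lift `α^v` of a 1-form, characterized by `α^v(Y^c) = (α(Y))^v`. -/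
def vliftForm (α : E → E →L[ℝ] ℝ) : E × E → E × E → ℝ := fun p w => α p.1 w.1

/-- Complete lift `α^c` of a 1-form, characterized by `α^c(Y^c) = (α(Y))^c`. -/
noncomputable def cliftForm (α : E → E →L[ℝ] ℝ) : E × E → E × E → ℝ :=
  fun p w => fderiv ℝ (fun y => α y w.1) p.1 p.2 + α p.1 w.2

/-- Complete lift `ω^c` of a (0,2)-tensor field, characterized by
`ω^c(X^c, Y^c) = (ω(X,Y))^c`. -/
noncomputable def cliftForm2 (ω : E → E →L[ℝ] E →L[ℝ] ℝ) :
    E × E → E × E → E × E → ℝ :=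
  fun p w w' => fderiv ℝ (fun y => ω y w.1 w'.1) p.1 p.2
    + ω p.1 w.2 w'.1 + ω p.1 w.1 w'.2

/-- The Lie bracket `[X,Y]` of vector fields on a model space. -/
noncomputable def VFBracket (X Y : E → E) : E → E :=
  fun x => fderiv ℝ Y x (X x) - fderiv ℝ X x (Y x)

/-- `Γ(F)`: smooth vector fields tangent to a distribution `D`. -/
def Sections (D : E → Submodule ℝ E) : Set (E → E) :=
  {X | ContDiff ℝ (⊤ : ℕ∞) X ∧ ∀ x, X x ∈ D x}

/-- The distribution `D` is involutive (Frobenius). -/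
def IsInvolutive (D : E → Submodule ℝ E) : Prop :=
  ∀ X ∈ Sections D, ∀ Y ∈ Sections D, ∀ x, VFBracket X Y x ∈ D x

end Lifts


section HessHelpers

variable {E F : Type*} [NormedAddCommGroup E] [NormedSpace ℝ E]
  [NormedAddCommGroup F] [NormedSpace ℝ F]

lemma hasFDerivAt_fdapp (g : E → F) (hg : ContDiff ℝ (⊤ : ℕ∞) g) (p : E × E) :
    HasFDerivAt (fun q : E × E => fderiv ℝ g q.1 q.2)
      (((fderiv ℝ g p.1).comp (ContinuousLinearMap.snd ℝ E E))
        + ((fderiv ℝ (fderiv ℝ g) p.1).comp (ContinuousLinearMap.fst ℝ E E)).flip p.2) p := by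
  have h1 : HasFDerivAt (fderiv ℝ g) (fderiv ℝ (fderiv ℝ g) p.1) p.1 :=
    (((hg.fderiv_right (m := (⊤ : ℕ∞)) (by simp)).differentiable (by simp)) p.1).hasFDerivAt
  exact (h1.comp p hasFDerivAt_fst).clm_apply hasFDerivAt_snd

lemma fderiv_fdapp (g : E → F) (hg : ContDiff ℝ (⊤ : ℕ∞) g) (p w : E × E) :
    fderiv ℝ (fun q : E × E => fderiv ℝ g q.1 q.2) p w
      = fderiv ℝ (fderiv ℝ g) p.1 w.1 p.2 + fderiv ℝ g p.1 w.2 := by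
  rw [(hasFDerivAt_fdapp g hg p).fderiv]; simp [add_comm]

lemma fderiv_pairing' (g : E → F) (hg : ContDiff ℝ (⊤ : ℕ∞) g) (X : E → E) (hX : ContDiff ℝ (⊤ : ℕ∞) X)
    (x v : E) :
    fderiv ℝ (fun y => fderiv ℝ g y (X y)) x v
      = fderiv ℝ (fderiv ℝ g) x v (X x) + fderiv ℝ g x (fderiv ℝ X x v) := by
  have h1 : HasFDerivAt (fderiv ℝ g) (fderiv ℝ (fderiv ℝ g) x) x :=
    (((hg.fderiv_right (m := (⊤ : ℕ∞)) (by simp)).differentiable (by simp)) x).hasFDerivAt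
  have h2 := h1.clm_apply ((hX.differentiable (by simp) x).hasFDerivAt)
  rw [h2.fderiv]; simp [add_comm]

lemma schwarz (g : E → F) (hg : ContDiff ℝ (⊤ : ℕ∞) g) (x v w : E) :
    fderiv ℝ (fderiv ℝ g) x v w = fderiv ℝ (fderiv ℝ g) x w v :=
  (hg.contDiffAt.isSymmSndFDerivAt (by simp only [minSmoothness_of_isRCLikeNormedField]; exact WithTop.coe_le_coe.mpr (le_top : (2 : ℕ∞) ≤ ⊤))) v w

lemma fderiv_cliftVF (X : E → E) (hX : ContDiff ℝ (⊤ : ℕ∞) X) (p w : E × E) :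
    fderiv ℝ (cliftVF X) p w
      = (fderiv ℝ X p.1 w.1, fderiv ℝ (fderiv ℝ X) p.1 w.1 p.2 + fderiv ℝ X p.1 w.2) := by
  have h1 : HasFDerivAt (fun q : E × E => X q.1)
      ((fderiv ℝ X p.1).comp (ContinuousLinearMap.fst ℝ E E)) p :=
    ((hX.differentiable (by simp) p.1).hasFDerivAt).comp p hasFDerivAt_fst
  have h3 : HasFDerivAt (cliftVF X) _ p := h1.prodMk (hasFDerivAt_fdapp X hX p)
  rw [h3.fderiv]; simp [add_comm]

lemma contDiff_VFBracket (X Y : E → E) (hX : ContDiff ℝ (⊤ : ℕ∞) X) (hY : ContDiff ℝ (⊤ : ℕ∞) Y) :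
    ContDiff ℝ (⊤ : ℕ∞) (VFBracket X Y) :=
  ((hY.fderiv_right (by simp)).clm_apply hX).sub ((hX.fderiv_right (by simp)).clm_apply hY)

lemma fderiv_omega_pairing (ω : E → E →L[ℝ] E →L[ℝ] ℝ) (hω : ContDiff ℝ (⊤ : ℕ∞) ω)
    (Y Z : E → E) (hY : ContDiff ℝ (⊤ : ℕ∞) Y) (hZ : ContDiff ℝ (⊤ : ℕ∞) Z) (x v : E) :
    fderiv ℝ (fun y => ω y (Y y) (Z y)) x v
      = fderiv ℝ (fun y => ω y (Y x) (Z x)) x v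
        + ω x (fderiv ℝ Y x v) (Z x) + ω x (Y x) (fderiv ℝ Z x v) := by
  have hω' : HasFDerivAt ω (fderiv ℝ ω x) x := ((hω.differentiable (by simp)) x).hasFDerivAt
  have hY' : HasFDerivAt Y (fderiv ℝ Y x) x := ((hY.differentiable (by simp)) x).hasFDerivAt
  have hZ' : HasFDerivAt Z (fderiv ℝ Z x) x := ((hZ.differentiable (by simp)) x).hasFDerivAt
  have h2 := (hω'.clm_apply hY').clm_apply hZ'
  have h3 := (hω'.clm_apply (hasFDerivAt_const (Y x) x)).clm_apply (hasFDerivAt_const (Z x) x)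
  rw [h2.fderiv, h3.fderiv]
  simp
  try ring

lemma cliftForm2_cliftVF (ω : E → E →L[ℝ] E →L[ℝ] ℝ) (hω : ContDiff ℝ (⊤ : ℕ∞) ω)
    (Y Z : E → E) (hY : ContDiff ℝ (⊤ : ℕ∞) Y) (hZ : ContDiff ℝ (⊤ : ℕ∞) Z) (p : E × E) :
    cliftForm2 ω p (cliftVF Y p) (cliftVF Z p)
      = fderiv ℝ (fun y => ω y (Y y) (Z y)) p.1 p.2 := by
  rw [fderiv_omega_pairing ω hω Y Z hY hZ p.1 p.2]
  simp only [cliftForm2, cliftVF]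
  try ring

end HessHelpers

/-- let `(M, ω, F₁, F₂)` be bi-Lagrangian with Hess connection `∇`
(the unique torsion-free connection parallelizing `ω` and preserving both
foliations), and let `∇^c` be the complete lift of `∇` to `TM`, characterized by
`∇^c_{X^c} Y^c = (∇_X Y)^c`. Then `∇^c` is torsion-free, parallelizes `ω^c`, and
preserves both lifted foliations `F₁^c`, `F₂^c`; hence `∇^c` is the Hess
connection of the bi-Lagrangian structure `(ω^c, F₁^c, F₂^c)` on `TM`. -/
theorem stmt13 {E : Type*} [NormedAddCommGroup E] [NormedSpace ℝ E]
    (ω : E → E →L[ℝ] E →L[ℝ] ℝ) (hω : ContDiff ℝ (⊤ : ℕ∞) ω)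
    (D₁ D₂ : E → Submodule ℝ E)
    (nab : (E → E) → (E → E) → (E → E))
    (nabc : (E × E → E × E) → (E × E → E × E) → (E × E → E × E))
    (hs : ∀ X Y : E → E, ContDiff ℝ (⊤ : ℕ∞) X → ContDiff ℝ (⊤ : ℕ∞) Y → ContDiff ℝ (⊤ : ℕ∞) (nab X Y))
    -- ∇ is torsion-free
    (htf : ∀ X Y : E → E, ContDiff ℝ (⊤ : ℕ∞) X → ContDiff ℝ (⊤ : ℕ∞) Y →
      ∀ x, nab X Y x - nab Y X x - VFBracket X Y x = 0)
    -- ∇ parallelizes ω : X(ω(Y,Z)) = ω(∇_X Y, Z) + ω(Y, ∇_X Z)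
    (hpar : ∀ X Y Z : E → E, ContDiff ℝ (⊤ : ℕ∞) X → ContDiff ℝ (⊤ : ℕ∞) Y → ContDiff ℝ (⊤ : ℕ∞) Z →
      ∀ x, fderiv ℝ (fun y => ω y (Y y) (Z y)) x (X x)
        - ω x (nab X Y x) (Z x) - ω x (Y x) (nab X Z x) = 0)
    -- ∇ preserves both foliations
    (hpres₁ : ∀ X : E → E, ContDiff ℝ (⊤ : ℕ∞) X → ∀ Y ∈ Sections D₁, nab X Y ∈ Sections D₁)
    (hpres₂ : ∀ X : E → E, ContDiff ℝ (⊤ : ℕ∞) X → ∀ Y ∈ Sections D₂, nab X Y ∈ Sections D₂)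
    -- ∇^c is the complete lift of ∇
    (hchar : ∀ X Y : E → E, nabc (cliftVF X) (cliftVF Y) = cliftVF (nab X Y)) :
    -- ∇^c is torsion-free
    (∀ X Y : E → E, ContDiff ℝ (⊤ : ℕ∞) X → ContDiff ℝ (⊤ : ℕ∞) Y →
      ∀ p, nabc (cliftVF X) (cliftVF Y) p - nabc (cliftVF Y) (cliftVF X) p
        - VFBracket (cliftVF X) (cliftVF Y) p = 0) ∧
    -- ∇^c parallelizes ω^c : X^c(ω^c(Y^c,Z^c)) = ω^c(∇^c_{X^c}Y^c, Z^c) + ω^c(Y^c, ∇^c_{X^c}Z^c)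
    (∀ X Y Z : E → E, ContDiff ℝ (⊤ : ℕ∞) X → ContDiff ℝ (⊤ : ℕ∞) Y → ContDiff ℝ (⊤ : ℕ∞) Z →
      ∀ p : E × E,
        fderiv ℝ (fun q => cliftForm2 ω q (cliftVF Y q) (cliftVF Z q)) p (cliftVF X p)
          - cliftForm2 ω p (nabc (cliftVF X) (cliftVF Y) p) (cliftVF Z p)
          - cliftForm2 ω p (cliftVF Y p) (nabc (cliftVF X) (cliftVF Z) p) = 0) ∧
    -- ∇^c preserves both lifted foliations
    (∀ X : E → E, ContDiff ℝ (⊤ : ℕ∞) X → ∀ Y ∈ Sections D₁,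
      ∃ Z ∈ Sections D₁, nabc (cliftVF X) (cliftVF Y) = cliftVF Z) ∧
    (∀ X : E → E, ContDiff ℝ (⊤ : ℕ∞) X → ∀ Y ∈ Sections D₂,
      ∃ Z ∈ Sections D₂, nabc (cliftVF X) (cliftVF Y) = cliftVF Z) := by
  have key2 : ∀ X Y Z : E → E, ContDiff ℝ (⊤ : ℕ∞) X → ContDiff ℝ (⊤ : ℕ∞) Y → ContDiff ℝ (⊤ : ℕ∞) Z →
      ∀ p : E × E,
        fderiv ℝ (fun q => cliftForm2 ω q (cliftVF Y q) (cliftVF Z q)) p (cliftVF X p)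
          - cliftForm2 ω p (nabc (cliftVF X) (cliftVF Y) p) (cliftVF Z p)
          - cliftForm2 ω p (cliftVF Y p) (nabc (cliftVF X) (cliftVF Z) p) = 0 := by
    intro X Y Z hX hY hZ p
    rw [hchar X Y, hchar X Z]
    set g : E → ℝ := fun y => ω y (Y y) (Z y) with hgdef
    have hg : ContDiff ℝ (⊤ : ℕ∞) g := (hω.clm_apply hY).clm_apply hZ
    have hfun : (fun q => cliftForm2 ω q (cliftVF Y q) (cliftVF Z q))
        = fun q : E × E => fderiv ℝ g q.1 q.2 := by
      funext q; exact cliftForm2_cliftVF ω hω Y Z hY hZ q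
    rw [hfun, fderiv_fdapp g hg p (cliftVF X p)]
    have hXp1 : (cliftVF X p).1 = X p.1 := rfl
    have hXp2 : (cliftVF X p).2 = fderiv ℝ X p.1 p.2 := rfl
    rw [hXp1, hXp2, schwarz g hg p.1 (X p.1) p.2]
    -- the lifted LHS is the complete lift of Xg := x ↦ fderiv g x (X x)
    have hlhs : fderiv ℝ (fderiv ℝ g) p.1 p.2 (X p.1) + fderiv ℝ g p.1 (fderiv ℝ X p.1 p.2)
        = fderiv ℝ (fun x => fderiv ℝ g x (X x)) p.1 p.2 :=
      (fderiv_pairing' g hg X hX p.1 p.2).symm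
    rw [hlhs]
    -- rewrite the two cliftForm2 terms
    have h1 : ContDiff ℝ (⊤ : ℕ∞) (nab X Y) := hs X Y hX hY
    have h2 : ContDiff ℝ (⊤ : ℕ∞) (nab X Z) := hs X Z hX hZ
    rw [cliftForm2_cliftVF ω hω (nab X Y) Z h1 hZ p,
        cliftForm2_cliftVF ω hω Y (nab X Z) hY h2 p]
    -- use hpar
    have hXg : (fun x => fderiv ℝ g x (X x))
        = fun x => (fun y => ω y (nab X Y y) (Z y)) x + (fun y => ω y (Y y) (nab X Z y)) x := by
      funext x
      have := hpar X Y Z hX hY hZ x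
      rw [sub_sub, sub_eq_zero] at this
      exact this
    have hd1 : DifferentiableAt ℝ (fun y => ω y (nab X Y y) (Z y)) p.1 :=
      (((hω.clm_apply h1).clm_apply hZ).differentiable (by simp)).differentiableAt
    have hd2 : DifferentiableAt ℝ (fun y => ω y (Y y) (nab X Z y)) p.1 :=
      (((hω.clm_apply hY).clm_apply h2).differentiable (by simp)).differentiableAt
    rw [hXg, fderiv_fun_add hd1 hd2]
    simp
  refine ⟨?_, key2, ?_, ?_⟩
  · -- torsion-free
    intro X Y hX hY p
    rw [hchar X Y, hchar Y X]
    have hVB : ContDiff ℝ (⊤ : ℕ∞) (VFBracket X Y) := contDiff_VFBracket X Y hX hY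
    have hfun : nab X Y = fun x => nab Y X x + VFBracket X Y x := by
      funext x
      have := htf X Y hX hY x
      rw [sub_sub, sub_eq_zero] at this
      exact this
    have e1 : fderiv ℝ (nab X Y) p.1 p.2
        = fderiv ℝ (nab Y X) p.1 p.2 + fderiv ℝ (VFBracket X Y) p.1 p.2 := by
      rw [hfun, fderiv_fun_add (((hs Y X hY hX).differentiable (by simp)).differentiableAt)
        ((hVB.differentiable (by simp)).differentiableAt)]
      simp
    have e2 : fderiv ℝ (VFBracket X Y) p.1 p.2
        = (fderiv ℝ (fderiv ℝ Y) p.1 (X p.1) p.2 + fderiv ℝ Y p.1 (fderiv ℝ X p.1 p.2))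
          - (fderiv ℝ (fderiv ℝ X) p.1 (Y p.1) p.2 + fderiv ℝ X p.1 (fderiv ℝ Y p.1 p.2)) := by
      have hu : VFBracket X Y = fun x => (fun y => fderiv ℝ Y y (X y)) x
          - (fun y => fderiv ℝ X y (Y y)) x := rfl
      have hdu : DifferentiableAt ℝ (fun y => fderiv ℝ Y y (X y)) p.1 :=
        ((((hY.fderiv_right (by simp)).clm_apply hX)).differentiable (by simp)).differentiableAt
      have hdv : DifferentiableAt ℝ (fun y => fderiv ℝ X y (Y y)) p.1 :=
        ((((hX.fderiv_right (by simp)).clm_apply hY)).differentiable (by simp)).differentiableAt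
      rw [hu, fderiv_fun_sub hdu hdv]
      simp only [ContinuousLinearMap.sub_apply]
      rw [fderiv_pairing' Y hY X hX p.1 p.2, fderiv_pairing' X hX Y hY p.1 p.2,
        schwarz Y hY p.1 p.2 (X p.1), schwarz X hX p.1 p.2 (Y p.1)]
    have hb1 : VFBracket (cliftVF X) (cliftVF Y) p
        = fderiv ℝ (cliftVF Y) p (cliftVF X p) - fderiv ℝ (cliftVF X) p (cliftVF Y p) := rfl
    rw [hb1, fderiv_cliftVF Y hY p (cliftVF X p), fderiv_cliftVF X hX p (cliftVF Y p)]
    have hXp1 : (cliftVF X p).1 = X p.1 := rfl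
    have hXp2 : (cliftVF X p).2 = fderiv ℝ X p.1 p.2 := rfl
    have hYp1 : (cliftVF Y p).1 = Y p.1 := rfl
    have hYp2 : (cliftVF Y p).2 = fderiv ℝ Y p.1 p.2 := rfl
    rw [hXp1, hXp2, hYp1, hYp2]
    have hc1 : cliftVF (nab X Y) p = (nab X Y p.1, fderiv ℝ (nab X Y) p.1 p.2) := rfl
    have hc2 : cliftVF (nab Y X) p = (nab Y X p.1, fderiv ℝ (nab Y X) p.1 p.2) := rfl
    rw [hc1, hc2, e1, e2]
    have hfirst : nab X Y p.1 = nab Y X p.1 + (fderiv ℝ Y p.1 (X p.1) - fderiv ℝ X p.1 (Y p.1)) := by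
      have := htf X Y hX hY p.1
      rw [sub_sub, sub_eq_zero] at this
      exact this
    rw [hfirst]
    apply Prod.ext <;> simp
  · intro X hX Y hY
    exact ⟨nab X Y, hpres₁ X hX Y hY, hchar X Y⟩
  · intro X hX Y hY
    exact ⟨nab X Y, hpres₂ X hX Y hY, hchar X Y⟩
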